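/- There is a constant c > 0, independent of N, such that for every positive integer N the vector field B̃_N(x) := √5 (2 sin(N x₃), sin(N x₁) + 2 cos(N x₃), cos(N x₁)) on 𝕋³ satisfies curl B̃_N = N B̃_N, its convective term is the gradient (B̃_N·∇)B̃_N = ∇(|B̃_N|²/2), and ‖(B̃_N·∇)B̃_N‖_{L²(𝕋³)} / ‖ΔB̃_N‖_{L²(𝕋³)} = c/N. -/

import Mathlib

open MeasureTheory Real Set

noncomputable section

abbrev E3 := Fin 3 → ℝ

def T3 : Set E3 := Set.Icc 0 (fun _ => 2 * Real.pi)

def SpacePeriodic {ι : Type*} (f : E3 → ι) : Prop :=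
  ∀ (x : E3) (j : Fin 3), f (x + (2 * Real.pi) • (Pi.single j 1 : E3)) = f x

def pd (j : Fin 3) (f : E3 → ℝ) : E3 → ℝ := fun x => fderiv ℝ f x (Pi.single j 1 : E3)

def pdM (β : Fin 3 → ℕ) (f : E3 → ℝ) : E3 → ℝ :=
  (pd 0)^[β 0] ((pd 1)^[β 1] ((pd 2)^[β 2] f))

def midx (m : ℕ) : Finset (Fin 3 → ℕ) := Finset.Nat.antidiagonalTuple 3 m

def gradSq {ι : Type*} [Fintype ι] (m : ℕ) (f : E3 → ι → ℝ) (x : E3) : ℝ :=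
  ∑ i : ι, ∑ β ∈ midx m, (pdM β (fun y => f y i) x) ^ 2

def HnormSq {ι : Type*} [Fintype ι] (r : ℕ) (f : E3 → ι → ℝ) : ℝ :=
  ∑ m ∈ Finset.range (r + 1), ∫ x in T3, gradSq m f x

def Hnorm {ι : Type*} [Fintype ι] (r : ℕ) (f : E3 → ι → ℝ) : ℝ :=
  Real.sqrt (HnormSq r f)

def L2norm {ι : Type*} [Fintype ι] (f : E3 → ι → ℝ) : ℝ := Hnorm 0 f

def LinfGrad {ι : Type*} [Fintype ι] (m : ℕ) (f : E3 → ι → ℝ) : ℝ :=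
  ⨆ x : E3, Real.sqrt (gradSq m f x)

def Linf {ι : Type*} [Fintype ι] (f : E3 → ι → ℝ) : ℝ := LinfGrad 0 f

def ZeroMean {ι : Type*} [Fintype ι] (f : E3 → ι → ℝ) : Prop :=
  ∀ i, (∫ x in T3, f x i) = 0

def vdiv (u : E3 → E3) : E3 → ℝ := fun x => ∑ j, pd j (fun y => u y j) x

def vcurl (u : E3 → E3) : E3 → E3 := fun x =>
  ![pd 1 (fun y => u y 2) x - pd 2 (fun y => u y 1) x,
    pd 2 (fun y => u y 0) x - pd 0 (fun y => u y 2) x,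
    pd 0 (fun y => u y 1) x - pd 1 (fun y => u y 0) x]

def lap (f : E3 → ℝ) : E3 → ℝ := fun x => ∑ j, pd j (pd j f) x

def IsNS (ν : ℝ) (I : Set ℝ) (u : E3 → ℝ → E3) (P : E3 → ℝ → ℝ) : Prop :=
  (∀ t ∈ I, ∀ (x : E3) (i : Fin 3),
      derivWithin (fun τ => u x τ i) I t
        + (∑ j, u x t j * pd j (fun y => u y t i) x)
        - ν * lap (fun y => u y t i) x
        = - pd i (fun y => P y t) x) ∧
  (∀ t ∈ I, ∀ x : E3, vdiv (fun y => u y t) x = 0)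

def SmoothOnTime (u : E3 → ℝ → E3) (I : Set ℝ) : Prop :=
  ContDiffOn ℝ (⊤ : ℕ∞) (fun p : E3 × ℝ => u p.1 p.2) (Set.univ ×ˢ I)

def wNormInf (m : ℕ) (w : E3 → ℝ → E3) (t : ℝ) : ℝ := LinfGrad m (fun x => w x t)

def Q (w : E3 → ℝ → E3) : ℕ → ℝ → ℝ
  | 0, _ => 1
  | (j + 1), t => 1 + ∑ m ∈ (Finset.range (j + 1)).attach,
      Q w m.1 t * ∫ τ in (0:ℝ)..t, (wNormInf (j + 1 - m.1) w τ) ^ 2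
  decreasing_by exact Finset.mem_range.mp m.2

def Qinf (w : E3 → ℝ → E3) (r : ℕ) : ℝ := ⨆ t : Set.Ici (0:ℝ), Q w r t

/-- The Beltrami fields `B̃_N(x) = √5 (2 sin(N x₃), sin(N x₁) + 2 cos(N x₃), cos(N x₁))`. -/
def BtN (N : ℕ) : E3 → E3 := fun x =>
  (Real.sqrt 5) •
    ![2 * Real.sin (N * x 2),
      Real.sin (N * x 0) + 2 * Real.cos (N * x 2),
      Real.cos (N * x 0)]

/-- The convective term `(u·∇)u` of a vector field `u`. -/
def convTerm (u : E3 → E3) : E3 → E3 := fun x i => ∑ j, u x j * pd j (fun y => u y i) x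

abbrev proj3 (k : Fin 3) : E3 →L[ℝ] ℝ := ContinuousLinearMap.proj k

lemma hfd_sin (c : ℝ) (k : Fin 3) (x : E3) :
    HasFDerivAt (fun y : E3 => Real.sin (c * y k)) ((c * Real.cos (c * x k)) • proj3 k) x := by
  have h1 : HasFDerivAt (fun y : E3 => c * y k) (c • proj3 k) x :=
    ((ContinuousLinearMap.hasFDerivAt (proj3 k) (x := x))).const_mul c
  have := (Real.hasDerivAt_sin (c * x k)).comp_hasFDerivAt x h1
  simpa [Function.comp_def, smul_smul, mul_comm] using this

lemma hfd_cos (c : ℝ) (k : Fin 3) (x : E3) :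
    HasFDerivAt (fun y : E3 => Real.cos (c * y k)) ((-(c * Real.sin (c * x k))) • proj3 k) x := by
  have h1 : HasFDerivAt (fun y : E3 => c * y k) (c • proj3 k) x :=
    ((ContinuousLinearMap.hasFDerivAt (proj3 k) (x := x))).const_mul c
  have := (Real.hasDerivAt_cos (c * x k)).comp_hasFDerivAt x h1
  simpa [Function.comp_def, smul_smul, mul_comm, ← neg_smul] using this

lemma pd_of {f : E3 → ℝ} {x : E3} {L : E3 →L[ℝ] ℝ} (h : HasFDerivAt f L x) (j : Fin 3) :
    pd j f x = L (Pi.single j 1) := by rw [pd, h.fderiv]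

lemma pd_sin (c : ℝ) (k j : Fin 3) (x : E3) :
    pd j (fun y : E3 => Real.sin (c * y k)) x = if k = j then c * Real.cos (c * x k) else 0 := by
  rw [pd_of (hfd_sin c k x)]
  simp [Pi.single_apply]

lemma pd_cos (c : ℝ) (k j : Fin 3) (x : E3) :
    pd j (fun y : E3 => Real.cos (c * y k)) x = if k = j then -(c * Real.sin (c * x k)) else 0 := by
  rw [pd_of (hfd_cos c k x)]
  simp [Pi.single_apply]

lemma pd_const (j : Fin 3) (c : ℝ) (x : E3) : pd j (fun _ : E3 => c) x = 0 := by
  simp [pd, fderiv_const]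

lemma pd_add {f g : E3 → ℝ} (hf : Differentiable ℝ f) (hg : Differentiable ℝ g)
    (j : Fin 3) (x : E3) :
    pd j (fun y => f y + g y) x = pd j f x + pd j g x := by
  simp [pd, fderiv_fun_add (hf x) (hg x)]

lemma pd_const_mul {f : E3 → ℝ} (hf : Differentiable ℝ f) (c : ℝ) (j : Fin 3) (x : E3) :
    pd j (fun y => c * f y) x = c * pd j f x := by
  simp [pd, fderiv_const_mul (hf x) c]

lemma pd_mul {f g : E3 → ℝ} (hf : Differentiable ℝ f) (hg : Differentiable ℝ g)
    (j : Fin 3) (x : E3) :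
    pd j (fun y => f y * g y) x = pd j f x * g x + f x * pd j g x := by
  simp [pd, fderiv_fun_mul (hf x) (hg x)]
  ring

lemma diff_sin (c : ℝ) (k : Fin 3) : Differentiable ℝ (fun y : E3 => Real.sin (c * y k)) :=
  fun x => (hfd_sin c k x).differentiableAt

lemma diff_cos (c : ℝ) (k : Fin 3) : Differentiable ℝ (fun y : E3 => Real.cos (c * y k)) :=
  fun x => (hfd_cos c k x).differentiableAt

def u0 (N : ℕ) : E3 → ℝ := fun y => Real.sqrt 5 * (2 * Real.sin ((N : ℝ) * y 2))
def u1 (N : ℕ) : E3 → ℝ :=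
  fun y => Real.sqrt 5 * (Real.sin ((N : ℝ) * y 0) + 2 * Real.cos ((N : ℝ) * y 2))
def u2 (N : ℕ) : E3 → ℝ := fun y => Real.sqrt 5 * Real.cos ((N : ℝ) * y 0)

lemma BtN_c0 (N : ℕ) : (fun y => BtN N y 0) = u0 N := by
  funext y; simp [BtN, u0]
lemma BtN_c1 (N : ℕ) : (fun y => BtN N y 1) = u1 N := by
  funext y; simp [BtN, u1]
lemma BtN_c2 (N : ℕ) : (fun y => BtN N y 2) = u2 N := by
  funext y; simp [BtN, u2]

lemma diff_u0 (N : ℕ) : Differentiable ℝ (u0 N) :=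
  (((diff_sin (N:ℝ) 2)).const_mul 2).const_mul _
lemma diff_u1 (N : ℕ) : Differentiable ℝ (u1 N) :=
  (((diff_sin (N:ℝ) 0)).add ((diff_cos (N:ℝ) 2).const_mul 2)).const_mul _
lemma diff_u2 (N : ℕ) : Differentiable ℝ (u2 N) :=
  ((diff_cos (N:ℝ) 0)).const_mul _

lemma pd_u0 (N : ℕ) (j : Fin 3) (x : E3) :
    pd j (u0 N) x =
      Real.sqrt 5 * (2 * (if (2 : Fin 3) = j then (N:ℝ) * Real.cos ((N:ℝ) * x 2) else 0)) := by
  rw [show u0 N = fun y => Real.sqrt 5 * ((fun z : E3 => 2 * Real.sin ((N:ℝ) * z 2)) y) from rfl,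
    pd_const_mul ((diff_sin (N:ℝ) 2).const_mul 2),
    pd_const_mul (diff_sin (N:ℝ) 2), pd_sin]

lemma pd_u1 (N : ℕ) (j : Fin 3) (x : E3) :
    pd j (u1 N) x =
      Real.sqrt 5 * ((if (0 : Fin 3) = j then (N:ℝ) * Real.cos ((N:ℝ) * x 0) else 0)
        + 2 * (if (2 : Fin 3) = j then -((N:ℝ) * Real.sin ((N:ℝ) * x 2)) else 0)) := by
  rw [show u1 N = fun y => Real.sqrt 5 *
      ((fun z : E3 => Real.sin ((N:ℝ) * z 0) + 2 * Real.cos ((N:ℝ) * z 2)) y) from rfl,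
    pd_const_mul (f := fun z : E3 => Real.sin ((N:ℝ) * z 0) + 2 * Real.cos ((N:ℝ) * z 2))
      ((diff_sin (N:ℝ) 0).add ((diff_cos (N:ℝ) 2).const_mul 2)),
    pd_add (diff_sin (N:ℝ) 0) ((diff_cos (N:ℝ) 2).const_mul 2),
    pd_const_mul (diff_cos (N:ℝ) 2), pd_sin, pd_cos]

lemma pd_u2 (N : ℕ) (j : Fin 3) (x : E3) :
    pd j (u2 N) x =
      Real.sqrt 5 * (if (0 : Fin 3) = j then -((N:ℝ) * Real.sin ((N:ℝ) * x 0)) else 0) := by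
  rw [show u2 N = fun y => Real.sqrt 5 * ((fun z : E3 => Real.cos ((N:ℝ) * z 0)) y) from rfl,
    pd_const_mul (diff_cos (N:ℝ) 0), pd_cos]

lemma curl_BtN (N : ℕ) (x : E3) : vcurl (BtN N) x = (N : ℝ) • BtN N x := by
  funext i
  rw [vcurl]
  simp only [BtN_c0, BtN_c1, BtN_c2]
  fin_cases i <;>
    simp [pd_u0, pd_u1, pd_u2, BtN, Matrix.cons_val_zero, Matrix.cons_val_one] <;> ring

lemma sq5 : Real.sqrt 5 * Real.sqrt 5 = 5 := Real.mul_self_sqrt (by norm_num)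

lemma Pfun (N : ℕ) :
    (fun y : E3 => (∑ j, (BtN N y j) ^ 2) / 2) =
      fun y => 25 / 2 + 10 * (Real.sin ((N:ℝ) * y 0) * Real.cos ((N:ℝ) * y 2)) := by
  funext y
  rw [Fin.sum_univ_three]
  simp only [BtN, Pi.smul_apply, smul_eq_mul, Matrix.cons_val_zero, Matrix.cons_val_one,
    Matrix.head_cons, Matrix.cons_val_two, Matrix.tail_cons]
  have h0 := Real.sin_sq_add_cos_sq ((N:ℝ) * y 0)
  have h2 := Real.sin_sq_add_cos_sq ((N:ℝ) * y 2)
  nlinarith [sq5, h0, h2]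

lemma conv_BtN (N : ℕ) (x : E3) (i : Fin 3) :
    convTerm (BtN N) x i =
      10 * ((if (0 : Fin 3) = i then (N:ℝ) * Real.cos ((N:ℝ) * x 0) else 0) * Real.cos ((N:ℝ) * x 2)
        + Real.sin ((N:ℝ) * x 0) * (if (2 : Fin 3) = i then -((N:ℝ) * Real.sin ((N:ℝ) * x 2)) else 0)) := by
  rw [convTerm]
  fin_cases i <;>
    · rw [Fin.sum_univ_three]
      simp only [Fin.zero_eta, Fin.mk_one, Fin.reduceFinMk, BtN_c0, BtN_c1, BtN_c2,
        pd_u0, pd_u1, pd_u2]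
      norm_num [BtN, Fin.ext_iff, Matrix.cons_val_two, Matrix.tail_cons, Matrix.head_cons]
      first
      | linear_combination (2*(N:ℝ)*Real.cos ((N:ℝ)*x 0)*Real.cos ((N:ℝ)*x 2)) * sq5
      | linear_combination (2*(N:ℝ)*Real.sin ((N:ℝ)*x 0)*Real.sin ((N:ℝ)*x 2)) * sq5
      | linear_combination (-2*(N:ℝ)*Real.sin ((N:ℝ)*x 0)*Real.sin ((N:ℝ)*x 2)) * sq5
      | nlinarith [sq5]

lemma pd_P (N : ℕ) (i : Fin 3) (x : E3) :
    pd i (fun y => (∑ j, (BtN N y j) ^ 2) / 2) x =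
      10 * ((if (0 : Fin 3) = i then (N:ℝ) * Real.cos ((N:ℝ) * x 0) else 0) * Real.cos ((N:ℝ) * x 2)
        + Real.sin ((N:ℝ) * x 0) * (if (2 : Fin 3) = i then -((N:ℝ) * Real.sin ((N:ℝ) * x 2)) else 0)) := by
  rw [Pfun]
  rw [show (fun y : E3 => 25 / 2 + 10 * (Real.sin ((N:ℝ) * y 0) * Real.cos ((N:ℝ) * y 2))) =
      fun y => (fun _ : E3 => (25:ℝ)/2) y +
        (fun z : E3 => 10 * ((fun w : E3 => Real.sin ((N:ℝ) * w 0) * Real.cos ((N:ℝ) * w 2)) z)) y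
    from rfl]
  rw [pd_add (g := fun z : E3 => 10 * ((fun w : E3 => Real.sin ((N:ℝ) * w 0) * Real.cos ((N:ℝ) * w 2)) z))
      (differentiable_const _)
      (((diff_sin (N:ℝ) 0).mul (diff_cos (N:ℝ) 2)).const_mul 10),
    pd_const,
    pd_const_mul (f := fun w : E3 => Real.sin ((N:ℝ) * w 0) * Real.cos ((N:ℝ) * w 2))
      ((diff_sin (N:ℝ) 0).mul (diff_cos (N:ℝ) 2)),
    pd_mul (diff_sin (N:ℝ) 0) (diff_cos (N:ℝ) 2), pd_sin, pd_cos]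
  ring

lemma conv_eq_grad (N : ℕ) (x : E3) (i : Fin 3) :
    convTerm (BtN N) x i = pd i (fun y => (∑ j, (BtN N y j) ^ 2) / 2) x := by
  rw [conv_BtN, pd_P]

-- function-level pd of components
lemma pd0_u0 (N : ℕ) : pd 0 (u0 N) = fun _ => (0:ℝ) := by
  funext x; rw [pd_u0]; norm_num [Fin.ext_iff]
lemma pd1_u0 (N : ℕ) : pd 1 (u0 N) = fun _ => (0:ℝ) := by
  funext x; rw [pd_u0]; norm_num [Fin.ext_iff]
lemma pd2_u0 (N : ℕ) :
    pd 2 (u0 N) = fun x => (Real.sqrt 5 * (2 * (N:ℝ))) * Real.cos ((N:ℝ) * x 2) := by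
  funext x; rw [pd_u0]; norm_num [Fin.ext_iff]; ring
lemma pd0_u1 (N : ℕ) :
    pd 0 (u1 N) = fun x => (Real.sqrt 5 * (N:ℝ)) * Real.cos ((N:ℝ) * x 0) := by
  funext x; rw [pd_u1]; norm_num [Fin.ext_iff]; ring
lemma pd1_u1 (N : ℕ) : pd 1 (u1 N) = fun _ => (0:ℝ) := by
  funext x; rw [pd_u1]; norm_num [Fin.ext_iff]
lemma pd2_u1 (N : ℕ) :
    pd 2 (u1 N) = fun x => (-(Real.sqrt 5 * (2 * (N:ℝ)))) * Real.sin ((N:ℝ) * x 2) := by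
  funext x; rw [pd_u1]; norm_num [Fin.ext_iff]; ring
lemma pd0_u2 (N : ℕ) :
    pd 0 (u2 N) = fun x => (-(Real.sqrt 5 * (N:ℝ))) * Real.sin ((N:ℝ) * x 0) := by
  funext x; rw [pd_u2]; norm_num [Fin.ext_iff]; ring
lemma pd1_u2 (N : ℕ) : pd 1 (u2 N) = fun _ => (0:ℝ) := by
  funext x; rw [pd_u2]; norm_num [Fin.ext_iff]
lemma pd2_u2 (N : ℕ) : pd 2 (u2 N) = fun _ => (0:ℝ) := by
  funext x; rw [pd_u2]; norm_num [Fin.ext_iff]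

lemma pd_zero_fun (j : Fin 3) : pd j (fun _ => (0:ℝ)) = fun _ => (0:ℝ) := by
  funext x; exact pd_const j 0 x

lemma pd_cmul_cos (a c : ℝ) (k j : Fin 3) (x : E3) :
    pd j (fun y : E3 => a * Real.cos (c * y k)) x
      = a * (if k = j then -(c * Real.sin (c * x k)) else 0) := by
  rw [pd_const_mul (diff_cos c k), pd_cos]

lemma pd_cmul_sin (a c : ℝ) (k j : Fin 3) (x : E3) :
    pd j (fun y : E3 => a * Real.sin (c * y k)) x
      = a * (if k = j then c * Real.cos (c * x k) else 0) := by
  rw [pd_const_mul (diff_sin c k), pd_sin]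

lemma lap_BtN (N : ℕ) (x : E3) (i : Fin 3) :
    lap (fun y => BtN N y i) x = -((N:ℝ)^2) * BtN N x i := by
  fin_cases i
  · rw [lap, Fin.sum_univ_three]
    simp only [Fin.zero_eta, Fin.mk_one, Fin.reduceFinMk, BtN_c0, BtN_c1, BtN_c2]
    rw [pd0_u0, pd1_u0, pd2_u0, pd_zero_fun, pd_zero_fun, pd_cmul_cos]
    simp only [pd_const]
    norm_num [BtN, Fin.ext_iff]
    ring
  · rw [lap, Fin.sum_univ_three]
    simp only [Fin.zero_eta, Fin.mk_one, Fin.reduceFinMk, BtN_c0, BtN_c1, BtN_c2]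
    rw [pd0_u1, pd1_u1, pd2_u1, pd_zero_fun, pd_cmul_cos, pd_cmul_sin]
    simp only [pd_const]
    norm_num [BtN, Fin.ext_iff]
    ring
  · rw [lap, Fin.sum_univ_three]
    simp only [Fin.zero_eta, Fin.mk_one, Fin.reduceFinMk, BtN_c0, BtN_c1, BtN_c2]
    rw [pd0_u2, pd1_u2, pd2_u2, pd_zero_fun, pd_zero_fun, pd_cmul_sin]
    simp only [pd_const]
    norm_num [BtN, Fin.ext_iff, Matrix.cons_val_two, Matrix.tail_cons, Matrix.head_cons]
    ring

lemma gradSq_zero {ι : Type*} [Fintype ι] (f : E3 → ι → ℝ) (x : E3) :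
    gradSq 0 f x = ∑ i, f x i ^ 2 := by
  unfold gradSq midx
  rw [Finset.Nat.antidiagonalTuple_zero_right]
  refine Finset.sum_congr rfl fun i _ => ?_
  rw [Finset.sum_singleton]
  show ((pd 0)^[(0 : Fin 3 → ℕ) 0] ((pd 1)^[(0 : Fin 3 → ℕ) 1] ((pd 2)^[(0 : Fin 3 → ℕ) 2] fun y => f y i)) x) ^ 2 = f x i ^ 2
  norm_num

lemma L2norm_eq {ι : Type*} [Fintype ι] (f : E3 → ι → ℝ) :
    L2norm f = Real.sqrt (∫ x in T3, ∑ i, f x i ^ 2) := by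
  rw [L2norm, Hnorm, HnormSq]
  rw [Finset.sum_range_one]
  congr 1
  exact integral_congr_ae (Filter.Eventually.of_forall fun x => gradSq_zero f x)

lemma integral_T3_prod (h : Fin 3 → ℝ → ℝ) :
    ∫ x in T3, ∏ i, h i (x i) = ∏ i, ∫ t in Icc (0:ℝ) (2*Real.pi), h i t := by
  have hT : T3 = Set.pi Set.univ (fun _ : Fin 3 => Icc (0:ℝ) (2*Real.pi)) := by
    rw [Set.pi_univ_Icc]; rfl
  rw [hT, ← MeasureTheory.integral_indicator (MeasurableSet.univ_pi fun _ => measurableSet_Icc)]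
  have key : ∀ x : E3,
      (Set.pi Set.univ (fun _ : Fin 3 => Icc (0:ℝ) (2*Real.pi))).indicator
        (fun x => ∏ i, h i (x i)) x
      = ∏ i, (Icc (0:ℝ) (2*Real.pi)).indicator (h i) (x i) := by
    intro x
    by_cases hx : x ∈ Set.pi Set.univ (fun _ : Fin 3 => Icc (0:ℝ) (2*Real.pi))
    · rw [Set.indicator_of_mem hx]
      exact Finset.prod_congr rfl fun i _ =>
        (Set.indicator_of_mem (hx i (Set.mem_univ i)) _).symm
    · rw [Set.indicator_of_notMem hx]
      rw [Set.mem_pi] at hx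
      push_neg at hx
      obtain ⟨j, -, hj⟩ := hx
      exact (Finset.prod_eq_zero (Finset.mem_univ j)
        (Set.indicator_of_notMem hj _)).symm
  rw [show (Set.pi Set.univ (fun _ : Fin 3 => Icc (0:ℝ) (2*Real.pi))).indicator
        (fun x : E3 => ∏ i, h i (x i))
      = fun x : E3 => ∏ i, (Icc (0:ℝ) (2*Real.pi)).indicator (h i) (x i) from funext key]
  rw [MeasureTheory.integral_fintype_prod_volume_eq_prod
    (f := fun i => (Icc (0:ℝ) (2*Real.pi)).indicator (h i))]
  exact Finset.prod_congr rfl fun i _ =>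
    (MeasureTheory.integral_indicator measurableSet_Icc)

lemma sin_nat_two_pi (N : ℕ) : Real.sin ((N:ℝ) * (2 * Real.pi)) = 0 := by
  have : (N:ℝ) * (2 * Real.pi) = ((2 * N : ℕ) : ℝ) * Real.pi := by push_cast; ring
  rw [this, Real.sin_nat_mul_pi]

lemma int_Icc_one : ∫ _t in Icc (0:ℝ) (2*Real.pi), (1:ℝ) = 2*Real.pi := by
  simp [Real.volume_Icc]
  positivity

lemma int_Icc_sin (N : ℕ) (hN : 0 < N) :
    ∫ t in Icc (0:ℝ) (2*Real.pi), Real.sin ((N:ℝ)*t) = 0 := by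
  rw [MeasureTheory.integral_Icc_eq_integral_Ioc,
    ← intervalIntegral.integral_of_le (by positivity)]
  have hc : ((N:ℝ)) ≠ 0 := by positivity
  rw [intervalIntegral.integral_comp_mul_left Real.sin hc]
  rw [mul_zero, integral_sin, Real.cos_nat_mul_two_pi, Real.cos_zero]
  simp

lemma int_Icc_cos_sq (N : ℕ) (hN : 0 < N) :
    ∫ t in Icc (0:ℝ) (2*Real.pi), Real.cos ((N:ℝ)*t) ^ 2 = Real.pi := by
  rw [MeasureTheory.integral_Icc_eq_integral_Ioc,
    ← intervalIntegral.integral_of_le (by positivity)]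
  have hc : ((N:ℝ)) ≠ 0 := by positivity
  rw [intervalIntegral.integral_comp_mul_left (fun t => Real.cos t ^ 2) hc]
  rw [mul_zero, integral_cos_sq, Real.cos_nat_mul_two_pi, sin_nat_two_pi,
    Real.cos_zero, Real.sin_zero]
  simp only [smul_eq_mul]
  field_simp
  ring

lemma int_Icc_sin_sq (N : ℕ) (hN : 0 < N) :
    ∫ t in Icc (0:ℝ) (2*Real.pi), Real.sin ((N:ℝ)*t) ^ 2 = Real.pi := by
  rw [MeasureTheory.integral_Icc_eq_integral_Ioc,
    ← intervalIntegral.integral_of_le (by positivity)]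
  have hc : ((N:ℝ)) ≠ 0 := by positivity
  rw [intervalIntegral.integral_comp_mul_left (fun t => Real.sin t ^ 2) hc]
  rw [mul_zero, integral_sin_sq, Real.cos_nat_mul_two_pi, sin_nat_two_pi,
    Real.cos_zero, Real.sin_zero]
  simp only [smul_eq_mul]
  field_simp
  ring

lemma int_Icc_const (a : ℝ) : ∫ _t in Icc (0:ℝ) (2*Real.pi), a = a * (2*Real.pi) := by
  rw [MeasureTheory.setIntegral_const]
  simp [Real.volume_Icc]
  rw [max_eq_left (by positivity)]
  ring

lemma int_prod02 (h0 h2 : ℝ → ℝ) :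
    ∫ x in T3, h0 (x 0) * h2 (x 2) =
      (∫ t in Icc (0:ℝ) (2*Real.pi), h0 t) * (2*Real.pi) *
        (∫ t in Icc (0:ℝ) (2*Real.pi), h2 t) := by
  have h := integral_T3_prod ![h0, fun _ => 1, h2]
  have e1 : (fun x : E3 => ∏ i, (![h0, fun _ => 1, h2] : Fin 3 → ℝ → ℝ) i (x i))
      = fun x : E3 => h0 (x 0) * h2 (x 2) := by
    funext x
    rw [Fin.prod_univ_three]
    simp [Matrix.cons_val_zero, Matrix.cons_val_one, Matrix.head_cons]
  rw [e1] at h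
  rw [h, Fin.prod_univ_three]
  simp only [Matrix.cons_val_zero, Matrix.cons_val_one, Matrix.head_cons]
  rw [int_Icc_one]
  norm_num [Matrix.cons_val_two, Matrix.tail_cons]

lemma intA (N : ℕ) (hN : 0 < N) :
    ∫ x in T3, ∑ i, convTerm (BtN N) x i ^ 2 = 400 * (N:ℝ)^2 * Real.pi^3 := by
  have hpt : (fun x : E3 => ∑ i, convTerm (BtN N) x i ^ 2) =
      fun x : E3 =>
        (fun t => 100*(N:ℝ)^2*Real.cos ((N:ℝ)*t)^2) (x 0) *
          (fun t => Real.cos ((N:ℝ)*t)^2) (x 2)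
        + (fun t => 100*(N:ℝ)^2*Real.sin ((N:ℝ)*t)^2) (x 0) *
          (fun t => Real.sin ((N:ℝ)*t)^2) (x 2) := by
    funext x
    rw [Fin.sum_univ_three, conv_BtN, conv_BtN, conv_BtN]
    norm_num [Fin.ext_iff]
    ring
  rw [hpt]
  have hi1 : MeasureTheory.IntegrableOn (fun x : E3 =>
      (fun t => 100*(N:ℝ)^2*Real.cos ((N:ℝ)*t)^2) (x 0) *
        (fun t => Real.cos ((N:ℝ)*t)^2) (x 2)) T3 := by
    apply ContinuousOn.integrableOn_compact isCompact_Icc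
    apply Continuous.continuousOn
    fun_prop
  have hi2 : MeasureTheory.IntegrableOn (fun x : E3 =>
      (fun t => 100*(N:ℝ)^2*Real.sin ((N:ℝ)*t)^2) (x 0) *
        (fun t => Real.sin ((N:ℝ)*t)^2) (x 2)) T3 := by
    apply ContinuousOn.integrableOn_compact isCompact_Icc
    apply Continuous.continuousOn
    fun_prop
  rw [MeasureTheory.integral_add hi1 hi2,
    int_prod02 (fun t => 100*(N:ℝ)^2*Real.cos ((N:ℝ)*t)^2) (fun t => Real.cos ((N:ℝ)*t)^2),
    int_prod02 (fun t => 100*(N:ℝ)^2*Real.sin ((N:ℝ)*t)^2) (fun t => Real.sin ((N:ℝ)*t)^2)]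
  rw [MeasureTheory.integral_const_mul, MeasureTheory.integral_const_mul,
    int_Icc_cos_sq N hN, int_Icc_sin_sq N hN]
  ring

lemma intB (N : ℕ) (hN : 0 < N) :
    ∫ x in T3, ∑ i, (lap (fun y => BtN N y i) x) ^ 2 = 200 * (N:ℝ)^4 * Real.pi^3 := by
  have hpt : (fun x : E3 => ∑ i, (lap (fun y => BtN N y i) x) ^ 2) =
      fun x : E3 =>
        (fun _t : ℝ => 25*(N:ℝ)^4) (x 0) * (fun _t : ℝ => (1:ℝ)) (x 2)
        + (fun t => 20*(N:ℝ)^4*Real.sin ((N:ℝ)*t)) (x 0) *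
          (fun t => Real.cos ((N:ℝ)*t)) (x 2) := by
    funext x
    rw [Fin.sum_univ_three, lap_BtN, lap_BtN, lap_BtN]
    simp only [BtN, Pi.smul_apply, smul_eq_mul, Matrix.cons_val_zero, Matrix.cons_val_one,
      Matrix.head_cons, Matrix.cons_val_two, Matrix.tail_cons]
    have h0 := Real.sin_sq_add_cos_sq ((N:ℝ) * x 0)
    have h2 := Real.sin_sq_add_cos_sq ((N:ℝ) * x 2)
    linear_combination ((N:ℝ)^4*(4*Real.sin ((N:ℝ)*x 2)^2 + Real.sin ((N:ℝ)*x 0)^2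
        + 4*Real.sin ((N:ℝ)*x 0)*Real.cos ((N:ℝ)*x 2) + 4*Real.cos ((N:ℝ)*x 2)^2
        + Real.cos ((N:ℝ)*x 0)^2)) * sq5
      + (5*(N:ℝ)^4) * h0 + (20*(N:ℝ)^4) * h2
  rw [hpt]
  have hi1 : MeasureTheory.IntegrableOn (fun x : E3 =>
      (fun _t : ℝ => 25*(N:ℝ)^4) (x 0) * (fun _t : ℝ => (1:ℝ)) (x 2)) T3 := by
    apply ContinuousOn.integrableOn_compact isCompact_Icc
    apply Continuous.continuousOn
    fun_prop
  have hi2 : MeasureTheory.IntegrableOn (fun x : E3 =>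
      (fun t => 20*(N:ℝ)^4*Real.sin ((N:ℝ)*t)) (x 0) *
        (fun t => Real.cos ((N:ℝ)*t)) (x 2)) T3 := by
    apply ContinuousOn.integrableOn_compact isCompact_Icc
    apply Continuous.continuousOn
    fun_prop
  rw [MeasureTheory.integral_add hi1 hi2,
    int_prod02 (fun _t : ℝ => 25*(N:ℝ)^4) (fun _t : ℝ => (1:ℝ)),
    int_prod02 (fun t => 20*(N:ℝ)^4*Real.sin ((N:ℝ)*t)) (fun t => Real.cos ((N:ℝ)*t))]
  have hsin : (∫ t in Icc (0:ℝ) (2*Real.pi), 20*(N:ℝ)^4*Real.sin ((N:ℝ)*t)) = 0 := by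
    rw [MeasureTheory.integral_const_mul, int_Icc_sin N hN, mul_zero]
  rw [hsin, int_Icc_const, int_Icc_one]
  ring

/-- properties of `B̃_N`: Beltrami with frequency `N`, convective term
equal to the gradient of `|B̃_N|²/2`, and
`‖(B̃_N·∇)B̃_N‖_{L²}/‖ΔB̃_N‖_{L²} = c/N` with `c` independent of `N`. -/
theorem BtN_properties :
    ∃ c : ℝ, 0 < c ∧
      ∀ N : ℕ, 0 < N →
        (∀ x, vcurl (BtN N) x = (N : ℝ) • BtN N x) ∧
        (∀ x i, convTerm (BtN N) x i =
          pd i (fun y => (∑ j, (BtN N y j) ^ 2) / 2) x) ∧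
        L2norm (convTerm (BtN N)) / L2norm (fun x i => lap (fun y => BtN N y i) x)
          = c / N := by
  refine ⟨Real.sqrt 2, Real.sqrt_pos.mpr (by norm_num), fun N hN => ?_⟩
  refine ⟨curl_BtN N, conv_eq_grad N, ?_⟩
  have hNR : (0:ℝ) < (N:ℝ) := by exact_mod_cast hN
  rw [L2norm_eq, L2norm_eq]
  rw [show (∫ x in T3, ∑ i, (fun x (i : Fin 3) => lap (fun y => BtN N y i) x) x i ^ 2)
      = ∫ x in T3, ∑ i, (lap (fun y => BtN N y i) x) ^ 2 from rfl]
  rw [intA N hN, intB N hN]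
  have h1 : (400:ℝ)*(N:ℝ)^2*Real.pi^3 = 2 * (200*(N:ℝ)^2*Real.pi^3) := by ring
  have h2 : (200:ℝ)*(N:ℝ)^4*Real.pi^3 = (N:ℝ)^2 * (200*(N:ℝ)^2*Real.pi^3) := by ring
  rw [h1, h2, Real.sqrt_mul (by norm_num : (0:ℝ) ≤ 2),
    Real.sqrt_mul (sq_nonneg (N:ℝ)), Real.sqrt_sq hNR.le]
  have hX : Real.sqrt (200*(N:ℝ)^2*Real.pi^3) ≠ 0 :=
    ne_of_gt (Real.sqrt_pos.mpr (by positivity))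
  rw [mul_div_mul_right _ _ hX]
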